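/- arXiv:2512.09896 — 3 statements merged into one kernel-verified Lean document; each statement's English description precedes it below -/
import Mathlib

section
/- Let Θ : [0,1] → [0,1] be convex with Θ(0) = 0 and Θ monotonically increasing. Then for all x₁, …, x_p ∈ [0,1] with x₁ + ⋯ + x_p ≤ 1, we have ∏_{i=1}^p (1 - Θ(x_i)) ≥ 1 - Θ(x₁ + ⋯ + x_p). -/
lemma superadd_aux (Θ : ℝ → ℝ)
    (hconv : ConvexOn ℝ (Set.Icc 0 1) Θ)
    (h0 : Θ 0 = 0) {a b : ℝ} (ha : 0 ≤ a) (hb : 0 ≤ b) (hab : a + b ≤ 1) :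
    Θ a + Θ b ≤ Θ (a + b) := by
  rcases eq_or_lt_of_le (add_nonneg ha hb) with h | h
  · have ha0 : a = 0 := by linarith [ha, hb]
    have hb0 : b = 0 := by linarith
    simp [ha0, hb0, h0]
  · set s := a + b with hs
    have hsmem : s ∈ Set.Icc (0:ℝ) 1 := ⟨le_of_lt h, hab⟩
    have h0mem : (0:ℝ) ∈ Set.Icc (0:ℝ) 1 := by constructor <;> norm_num
    have hda : 0 ≤ a / s := div_nonneg ha h.le
    have hdb : 0 ≤ b / s := div_nonneg hb h.le
    have hadd : a / s + b / s = 1 := by field_simp; exact hs.symm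
    have h1 := hconv.2 hsmem h0mem hda hdb hadd
    have h2 := hconv.2 hsmem h0mem hdb hda (by linarith)
    simp only [smul_eq_mul, mul_zero, add_zero, h0] at h1 h2
    have e1 : a / s * s = a := div_mul_cancel₀ a h.ne'
    have e2 : b / s * s = b := div_mul_cancel₀ b h.ne'
    rw [e1] at h1; rw [e2] at h2
    have : a / s * Θ s + b / s * Θ s = Θ s := by
      rw [← add_mul, hadd, one_mul]
    linarith

theorem stmt2 (Θ : ℝ → ℝ)
    (hconv : ConvexOn ℝ (Set.Icc 0 1) Θ)
    (hmono : MonotoneOn Θ (Set.Icc 0 1))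
    (h0 : Θ 0 = 0)
    (hmaps : ∀ x ∈ Set.Icc (0:ℝ) 1, Θ x ∈ Set.Icc (0:ℝ) 1)
    (p : ℕ) (x : Fin p → ℝ)
    (hx : ∀ i, x i ∈ Set.Icc (0:ℝ) 1)
    (hsum : ∑ i, x i ≤ 1) :
    ∏ i, (1 - Θ (x i)) ≥ 1 - Θ (∑ i, x i) := by
  induction p with
  | zero => simp [h0]
  | succ n ih =>
    have hx0 := hx 0
    have hxt : ∀ i : Fin n, x i.succ ∈ Set.Icc (0:ℝ) 1 := fun i => hx i.succ
    have hsum' : ∑ i, x i = x 0 + ∑ i : Fin n, x i.succ := Fin.sum_univ_succ x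
    have htnn : 0 ≤ ∑ i : Fin n, x i.succ :=
      Finset.sum_nonneg fun i _ => (hxt i).1
    have htsum : ∑ i : Fin n, x i.succ ≤ 1 := by
      have := hx0.1; linarith [hsum, hsum'.symm.le]
    have IH := ih (fun i => x i.succ) hxt htsum
    have hS : ∑ i : Fin n, x i.succ ∈ Set.Icc (0:ℝ) 1 := ⟨htnn, htsum⟩
    have hΘS := hmaps _ hS
    have hΘ0 := hmaps _ hx0
    have h1 : (1 : ℝ) - Θ (x 0) ≥ 0 := by linarith [hΘ0.2]
    rw [Fin.prod_univ_succ, hsum']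
    calc (1 - Θ (x 0)) * ∏ i : Fin n, (1 - Θ (x i.succ))
        ≥ (1 - Θ (x 0)) * (1 - Θ (∑ i : Fin n, x i.succ)) := by
          apply mul_le_mul_of_nonneg_left IH h1
      _ ≥ 1 - Θ (x 0 + ∑ i : Fin n, x i.succ) := by
          have hsa := superadd_aux Θ hconv h0 hx0.1 htnn (by rw [← hsum']; exact hsum)
          have := mul_nonneg hΘ0.1 hΘS.1
          nlinarith
end

section
/- max over x ∈ [0,1] of min{ (2 - x²)/2 , (2 + 2x)/(2 + √3) } equals 2(√3 + √(10 + 4√3)) / (2 + √3)², attained at x = (-2 + √(10 + 4√3))/(2 + √3); numerically this value is approximately 0.8395111. -/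
theorem stmt7 :
    (∀ x ∈ Set.Icc (0:ℝ) 1,
      min ((2 - x^2)/2) ((2 + 2*x)/(2 + Real.sqrt 3)) ≤
        2 * (Real.sqrt 3 + Real.sqrt (10 + 4 * Real.sqrt 3)) / (2 + Real.sqrt 3)^2) ∧
    ((-2 + Real.sqrt (10 + 4 * Real.sqrt 3)) / (2 + Real.sqrt 3) ∈ Set.Icc (0:ℝ) 1) ∧
    (min ((2 - ((-2 + Real.sqrt (10 + 4 * Real.sqrt 3)) / (2 + Real.sqrt 3))^2)/2)
        ((2 + 2*((-2 + Real.sqrt (10 + 4 * Real.sqrt 3)) / (2 + Real.sqrt 3)))/(2 + Real.sqrt 3)) =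
      2 * (Real.sqrt 3 + Real.sqrt (10 + 4 * Real.sqrt 3)) / (2 + Real.sqrt 3)^2) ∧
    |2 * (Real.sqrt 3 + Real.sqrt (10 + 4 * Real.sqrt 3)) / (2 + Real.sqrt 3)^2
      - 0.8395111| < 0.000001 := by
  set s := Real.sqrt 3 with hs_def
  set r := Real.sqrt (10 + 4 * Real.sqrt 3) with hr_def
  have hs0 : 0 ≤ s := Real.sqrt_nonneg 3
  have hs2 : s ^ 2 = 3 := Real.sq_sqrt (by norm_num)
  have hr0 : 0 ≤ r := Real.sqrt_nonneg _
  have hr2 : r ^ 2 = 10 + 4 * s := Real.sq_sqrt (by nlinarith)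
  have hslb : 1.7320508 < s := by nlinarith
  have hsub : s < 1.7320509 := by nlinarith
  have hrlb : 4.1143897 < r := by nlinarith
  have hrub : r < 4.1143899 := by nlinarith
  have hden : (0:ℝ) < 2 + s := by linarith
  have hden2 : (0:ℝ) < (2 + s) ^ 2 := by positivity
  have hxmem : (-2 + r) / (2 + s) ∈ Set.Icc (0:ℝ) 1 := by
    constructor
    · apply div_nonneg _ hden.le; linarith
    · rw [div_le_one hden]; linarith
  have key : (2 - ((-2 + r) / (2 + s)) ^ 2) / 2 = 2 * (s + r) / (2 + s) ^ 2 := by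
    field_simp
    nlinarith
  have key2 : (2 + 2 * ((-2 + r) / (2 + s))) / (2 + s) = 2 * (s + r) / (2 + s) ^ 2 := by
    rw [div_eq_div_iff hden.ne' hden2.ne']
    field_simp
    ring
  refine ⟨?_, hxmem, ?_, ?_⟩
  · rintro x ⟨hx0, hx1⟩
    rcases le_total x ((-2 + r) / (2 + s)) with h | h
    · refine le_trans (min_le_right _ _) ?_
      rw [← key2]
      gcongr
    · refine le_trans (min_le_left _ _) ?_
      rw [← key]
      have hx0' : 0 ≤ (-2 + r) / (2 + s) := hxmem.1
      have : ((-2 + r) / (2 + s)) ^ 2 ≤ x ^ 2 := by nlinarith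
      linarith
  · rw [key, key2, min_self]
  · have hVlb : (0.8395101:ℝ) < 2 * (s + r) / (2 + s) ^ 2 := by
      rw [lt_div_iff₀ hden2]; nlinarith
    have hVub : 2 * (s + r) / (2 + s) ^ 2 < 0.8395121 := by
      rw [div_lt_iff₀ hden2]; nlinarith
    rw [abs_lt]; constructor <;> [linarith; linarith]
end

section
/- For all real angles a, b, c, d, the quantity S := 4 + 2(cos a cos c + cos b cos d) + (sin a)(cos b + cos d) + (sin b)(cos a + cos c) + (sin c)(cos b + cos d) + (sin d)(cos a + cos c) satisfies S ≤ 2(3 + √5). Moreover, equality holds when a = b = c = d = arctan((√5 - 1)/2). -/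
open Real in
noncomputable def S (a b c d : ℝ) : ℝ :=
  4 + 2 * (cos a * cos c + cos b * cos d)
    + sin a * (cos b + cos d) + sin b * (cos a + cos c)
    + sin c * (cos b + cos d) + sin d * (cos a + cos c)

theorem stmt8 :
    (∀ a b c d : ℝ, S a b c d ≤ 2 * (3 + Real.sqrt 5)) ∧
    (S (Real.arctan ((Real.sqrt 5 - 1)/2)) (Real.arctan ((Real.sqrt 5 - 1)/2))
       (Real.arctan ((Real.sqrt 5 - 1)/2)) (Real.arctan ((Real.sqrt 5 - 1)/2))
      = 2 * (3 + Real.sqrt 5)) := by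
  have hs5 : Real.sqrt 5 ^ 2 = 5 := Real.sq_sqrt (by norm_num)
  have hs5pos : (2:ℝ) ≤ Real.sqrt 5 := by
    nlinarith [Real.sqrt_nonneg 5]
  constructor
  · intro a b c d
    have ha := Real.sin_sq_add_cos_sq a
    have hb := Real.sin_sq_add_cos_sq b
    have hc := Real.sin_sq_add_cos_sq c
    have hd := Real.sin_sq_add_cos_sq d
    unfold S
    nlinarith [sq_nonneg (Real.cos a - Real.cos c), sq_nonneg (Real.cos b - Real.cos d),
      sq_nonneg (2 * Real.sin a - (Real.sqrt 5 - 1) * Real.cos b),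
      sq_nonneg (2 * Real.sin a - (Real.sqrt 5 - 1) * Real.cos d),
      sq_nonneg (2 * Real.sin c - (Real.sqrt 5 - 1) * Real.cos b),
      sq_nonneg (2 * Real.sin c - (Real.sqrt 5 - 1) * Real.cos d),
      sq_nonneg (2 * Real.sin b - (Real.sqrt 5 - 1) * Real.cos a),
      sq_nonneg (2 * Real.sin b - (Real.sqrt 5 - 1) * Real.cos c),
      sq_nonneg (2 * Real.sin d - (Real.sqrt 5 - 1) * Real.cos a),
      sq_nonneg (2 * Real.sin d - (Real.sqrt 5 - 1) * Real.cos c)]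
  · set x : ℝ := (Real.sqrt 5 - 1)/2 with hx
    set t := Real.arctan x with ht
    have hcos : Real.cos t = 1 / Real.sqrt (1 + x ^ 2) := Real.cos_arctan x
    have hsin : Real.sin t = x / Real.sqrt (1 + x ^ 2) := Real.sin_arctan x
    have hx2 : 1 + x ^ 2 = (5 - Real.sqrt 5)/2 := by
      rw [hx]; ring_nf; nlinarith [hs5]
    have hpos : (0:ℝ) < 1 + x ^ 2 := by rw [hx2]; nlinarith
    have hsq : Real.sqrt (1 + x ^ 2) ^ 2 = 1 + x ^ 2 := Real.sq_sqrt hpos.le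
    have hrpos : (0:ℝ) < Real.sqrt (1 + x ^ 2) := Real.sqrt_pos.mpr hpos
    unfold S
    rw [hcos, hsin]
    field_simp
    nlinarith [hsq, hx2, hs5, hrpos]
end
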